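/- Let L₁, L₂, l, τ > 0, let M̄ = (M̄₁, M̄₂, 0) ∈ ℝ³ be a nonzero vector with vanishing third component, and let a > 0. Then there exists a smooth vector field w : ℝ³ → ℝ³ that is horizontally periodic (with periods 2πL₁ and 2πL₂ in y₁ and y₂), divergence-free on ℝ³, vanishes whenever y₃ lies outside some compact subset of (−l, τ), whose trace y_h ↦ w₃(y_h, 0) is not identically zero, and which satisfies ∫_{Q×(−l,τ)} |M̄₁ ∂₁w(y) + M̄₂ ∂₂w(y)|² dy < a · ∫_Q |w₃(y_h, 0)|² dy_h. -/

import Mathlib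

/-!
Fix a bump `f` with `f 0 = 1` supported in `(-l, τ)` and a nonzero vector `k = (n₁/L₁, n₂/L₂)`
of the dual lattice of the period cell. The field
`w = (-k f'(y₃) sin (k·y_h) / |k|², f(y₃) cos (k·y_h))` is smooth, periodic and solenoidal, and
its trace `cos (k·y_h)` has squared mean `1/2` over `Q`, whatever `k` is. Differentiating along
`M̄` only hits the phase, so it produces the factor `M̄·k`, while the remaining factor stays
bounded because `|k|²` is bounded below on the nonzero lattice. Dirichlet's approximation
theorem supplies nonzero lattice vectors with `M̄·k` as small as we like.
-/

open MeasureTheory Real Function Set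
open scoped ContDiff

theorem exists_int_pair_ne_zero_abs_mul_add_mul_lt (u v : ℝ) {ε : ℝ} (hε : 0 < ε) :
    ∃ p q : ℤ, (p, q) ≠ (0, 0) ∧ |p * u + q * v| < ε := by
  rcases eq_or_ne u 0 with rfl | hu
  · exact ⟨1, 0, by simp, by simpa⟩
  obtain ⟨n, hn⟩ := exists_nat_gt (|u| / ε)
  obtain ⟨j, k, hk, -, hjk⟩ := Real.exists_int_int_abs_mul_sub_le (v / u) n.succ_pos
  refine ⟨-j, k, by simp [hk.ne'], ?_⟩
  calc |((-j : ℤ) : ℝ) * u + k * v| = |u| * |k * (v / u) - j| := by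
        rw [← abs_mul]; congr 1; field_simp; push_cast; ring
    _ ≤ |u| * (1 / (n + 1)) := by gcongr; exact_mod_cast hjk.trans (by gcongr; simp)
    _ < ε := by
        rw [mul_one_div, div_lt_iff₀ (by positivity), ← div_lt_iff₀' hε]; linarith

def planeWave (a b : ℝ → ℝ) (c₁ c₂ : ℝ) (y : Fin 3 → ℝ) : ℝ :=
  a (y 2) * b (c₁ * y 0 + c₂ * y 1)

section planeWave

variable {a b : ℝ → ℝ} {c₁ c₂ : ℝ}

theorem contDiff_planeWave {n : WithTop ℕ∞} (ha : ContDiff ℝ n a) (hb : ContDiff ℝ n b) :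
    ContDiff ℝ n (planeWave a b c₁ c₂) := by
  unfold planeWave
  fun_prop

theorem planeWave_add (a : ℝ → ℝ) (hb : Periodic b (2 * π)) {y v : Fin 3 → ℝ} (hv : v 2 = 0)
    {k : ℤ} (hphase : c₁ * v 0 + c₂ * v 1 = k * (2 * π)) :
    planeWave a b c₁ c₂ (y + v) = planeWave a b c₁ c₂ y := by
  simp only [planeWave, Pi.add_apply, hv, add_zero]
  rw [show c₁ * (y 0 + v 0) + c₂ * (y 1 + v 1) = c₁ * y 0 + c₂ * y 1 + k * (2 * π) by
    linear_combination hphase, hb.int_mul k]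

theorem fderiv_planeWave_apply (ha : Differentiable ℝ a) (hb : Differentiable ℝ b)
    (y v : Fin 3 → ℝ) :
    fderiv ℝ (planeWave a b c₁ c₂) y v =
      a (y 2) * deriv b (c₁ * y 0 + c₂ * y 1) * (c₁ * v 0 + c₂ * v 1)
        + deriv a (y 2) * b (c₁ * y 0 + c₂ * y 1) * v 2 := by
  have hphase := ((hasFDerivAt_apply (𝕜 := ℝ) 0 y).const_mul c₁).add
    ((hasFDerivAt_apply (𝕜 := ℝ) 1 y).const_mul c₂)
  have hvert := (ha (y 2)).hasDerivAt.comp_hasFDerivAt y (hasFDerivAt_apply (𝕜 := ℝ) 2 y)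
  have hhor := (hb (c₁ * y 0 + c₂ * y 1)).hasDerivAt.comp_hasFDerivAt y hphase
  have hwave : HasFDerivAt (planeWave a b c₁ c₂) _ y := hvert.mul hhor
  rw [hwave.fderiv]
  simp only [add_apply, smul_apply, ContinuousLinearMap.proj_apply, smul_eq_mul, comp_apply]
  ring

end planeWave

noncomputable def solenoidalMode (f : ℝ → ℝ) (c₁ c₂ : ℝ) (y : Fin 3 → ℝ) : Fin 3 → ℝ :=
  ![planeWave (fun t => -c₁ / (c₁ ^ 2 + c₂ ^ 2) * deriv f t) sin c₁ c₂ y,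
    planeWave (fun t => -c₂ / (c₁ ^ 2 + c₂ ^ 2) * deriv f t) sin c₁ c₂ y,
    planeWave f cos c₁ c₂ y]

section solenoidalMode

variable {f : ℝ → ℝ} {c₁ c₂ : ℝ}

theorem contDiff_solenoidalMode (hf : ContDiff ℝ ∞ f) :
    ContDiff ℝ ∞ (solenoidalMode f c₁ c₂) := by
  have hf' : ContDiff ℝ ∞ (deriv f) := (contDiff_infty_iff_deriv.mp hf).2
  refine contDiff_pi.mpr fun i => ?_
  fin_cases i
  · exact contDiff_planeWave (contDiff_const.mul hf') contDiff_sin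
  · exact contDiff_planeWave (contDiff_const.mul hf') contDiff_sin
  · exact contDiff_planeWave hf contDiff_cos

theorem solenoidalMode_add (y : Fin 3 → ℝ) {v : Fin 3 → ℝ} (hv : v 2 = 0) {k : ℤ}
    (hphase : c₁ * v 0 + c₂ * v 1 = k * (2 * π)) :
    solenoidalMode f c₁ c₂ (y + v) = solenoidalMode f c₁ c₂ y := by
  simp only [solenoidalMode, planeWave_add _ sin_periodic hv hphase,
    planeWave_add _ cos_periodic hv hphase]

theorem solenoidalMode_eq_zero {y : Fin 3 → ℝ} (hy : y 2 ∉ tsupport f) :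
    solenoidalMode f c₁ c₂ y = 0 := by
  have hf : f (y 2) = 0 := image_eq_zero_of_notMem_tsupport hy
  have hf' : deriv f (y 2) = 0 := notMem_support.mp fun h => hy (support_deriv_subset h)
  ext i
  fin_cases i <;> simp [solenoidalMode, planeWave, hf, hf']

theorem solenoidalMode_trace (x₁ x₂ : ℝ) :
    solenoidalMode f c₁ c₂ ![x₁, x₂, 0] 2 = f 0 * cos (c₁ * x₁ + c₂ * x₂) := by
  simp [solenoidalMode, planeWave]

theorem sum_fderiv_solenoidalMode (hf : Differentiable ℝ f) (hf' : Differentiable ℝ (deriv f))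
    (hc : c₁ ^ 2 + c₂ ^ 2 ≠ 0) (y : Fin 3 → ℝ) :
    ∑ i : Fin 3, fderiv ℝ (fun z => solenoidalMode f c₁ c₂ z i) y (Pi.single i 1) = 0 := by
  simp only [Fin.sum_univ_three, solenoidalMode, Matrix.cons_val_zero, Matrix.cons_val_one,
    Matrix.cons_val_two, Matrix.head_cons, Matrix.tail_cons]
  rw [fderiv_planeWave_apply (hf'.const_mul _) differentiable_sin,
    fderiv_planeWave_apply (hf'.const_mul _) differentiable_sin,
    fderiv_planeWave_apply hf differentiable_cos]
  simp only [Pi.single_eq_same, ne_eq, one_ne_zero, zero_ne_one, Fin.reduceEq, not_false_eq_true,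
    Pi.single_eq_of_ne, Real.deriv_sin, deriv_cos',
    deriv_const_mul_field', mul_one, mul_zero, add_zero, zero_add]
  field_simp
  ring

theorem sum_sq_horizontalDeriv_solenoidalMode (hf : Differentiable ℝ f)
    (hf' : Differentiable ℝ (deriv f)) (hc : c₁ ^ 2 + c₂ ^ 2 ≠ 0) (m₁ m₂ : ℝ) (y : Fin 3 → ℝ) :
    ∑ j : Fin 3, (m₁ * fderiv ℝ (fun z => solenoidalMode f c₁ c₂ z j) y (Pi.single 0 1) +
        m₂ * fderiv ℝ (fun z => solenoidalMode f c₁ c₂ z j) y (Pi.single 1 1)) ^ 2 =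
      (m₁ * c₁ + m₂ * c₂) ^ 2 *
        (cos (c₁ * y 0 + c₂ * y 1) ^ 2 * (deriv f (y 2) ^ 2 / (c₁ ^ 2 + c₂ ^ 2)) +
          sin (c₁ * y 0 + c₂ * y 1) ^ 2 * f (y 2) ^ 2) := by
  simp only [Fin.sum_univ_three, solenoidalMode, Matrix.cons_val_zero, Matrix.cons_val_one,
    Matrix.cons_val_two, Matrix.head_cons, Matrix.tail_cons]
  simp only [fderiv_planeWave_apply (hf'.const_mul _) differentiable_sin,
    fderiv_planeWave_apply hf differentiable_cos]
  simp only [Pi.single_eq_same, ne_eq, one_ne_zero, zero_ne_one, Fin.reduceEq, not_false_eq_true,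
    Pi.single_eq_of_ne, Real.deriv_sin, deriv_cos', mul_one, mul_zero, add_zero]
  field_simp
  ring

theorem sum_sq_horizontalDeriv_solenoidalMode_le (hf : Differentiable ℝ f)
    (hf' : Differentiable ℝ (deriv f)) {C κ : ℝ} (hC : ∀ t, |deriv f t| ≤ C)
    (hf1 : ∀ t, |f t| ≤ 1) (hκ : 0 < κ) (hκc : κ ≤ c₁ ^ 2 + c₂ ^ 2) (m₁ m₂ : ℝ)
    (y : Fin 3 → ℝ) :
    ∑ j : Fin 3, (m₁ * fderiv ℝ (fun z => solenoidalMode f c₁ c₂ z j) y (Pi.single 0 1) +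
        m₂ * fderiv ℝ (fun z => solenoidalMode f c₁ c₂ z j) y (Pi.single 1 1)) ^ 2 ≤
      (m₁ * c₁ + m₂ * c₂) ^ 2 * (C ^ 2 / κ + 1) := by
  rw [sum_sq_horizontalDeriv_solenoidalMode hf hf' (hκ.trans_le hκc).ne' m₁ m₂ y]
  have hderiv : deriv f (y 2) ^ 2 / (c₁ ^ 2 + c₂ ^ 2) ≤ C ^ 2 / κ :=
    div_le_div₀ (sq_nonneg C) (sq_le_sq' (abs_le.mp (hC _)).1 (abs_le.mp (hC _)).2) hκ hκc
  have hval : f (y 2) ^ 2 ≤ 1 := by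
    rw [← sq_abs, sq_le_one_iff_abs_le_one, abs_abs]; exact hf1 _
  refine mul_le_mul_of_nonneg_left ?_ (sq_nonneg _)
  calc _ ≤ 1 * (C ^ 2 / κ) + 1 * 1 :=
        add_le_add (mul_le_mul (cos_sq_le_one _) hderiv (by positivity) zero_le_one)
          (mul_le_mul (sin_sq_le_one _) hval (sq_nonneg _) zero_le_one)
    _ = C ^ 2 / κ + 1 := by ring

theorem setIntegral_sum_sq_horizontalDeriv_solenoidalMode_le (hf : Differentiable ℝ f)
    (hf' : Differentiable ℝ (deriv f)) {C κ : ℝ} (hC : ∀ t, |deriv f t| ≤ C)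
    (hf1 : ∀ t, |f t| ≤ 1) (hκ : 0 < κ) (hκc : κ ≤ c₁ ^ 2 + c₂ ^ 2) (m₁ m₂ : ℝ)
    {S : Set (Fin 3 → ℝ)} (hS : volume S < ⊤) :
    ∫ y in S, ∑ j : Fin 3,
        (m₁ * fderiv ℝ (fun z => solenoidalMode f c₁ c₂ z j) y (Pi.single 0 1) +
          m₂ * fderiv ℝ (fun z => solenoidalMode f c₁ c₂ z j) y (Pi.single 1 1)) ^ 2 ≤
      (m₁ * c₁ + m₂ * c₂) ^ 2 * (C ^ 2 / κ + 1) * volume.real S := by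
  refine (le_abs_self _).trans ?_
  rw [← Real.norm_eq_abs]
  refine norm_setIntegral_le_of_norm_le_const hS fun y _ => ?_
  rw [Real.norm_eq_abs, abs_of_nonneg (by positivity)]
  exact sum_sq_horizontalDeriv_solenoidalMode_le hf hf' hC hf1 hκ hκc m₁ m₂ y

end solenoidalMode

theorem volume_setOf_mem_Ioo_lt_top (a₀ b₀ a₁ b₁ a₂ b₂ : ℝ) :
    volume {y : Fin 3 → ℝ | y 0 ∈ Ioo a₀ b₀ ∧ y 1 ∈ Ioo a₁ b₁ ∧ y 2 ∈ Ioo a₂ b₂} < ⊤ := by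
  refine (measure_mono fun y hy => ?_).trans_lt
    (isCompact_Icc (a := ![a₀, a₁, a₂]) (b := ![b₀, b₁, b₂])).measure_lt_top
  obtain ⟨h₀, h₁, h₂⟩ := hy
  constructor <;> intro i <;> fin_cases i
  exacts [h₀.1.le, h₁.1.le, h₂.1.le, h₀.2.le, h₁.2.le, h₂.2.le]

theorem min_one_div_sq_le_sq_add_sq (L₁ L₂ : ℝ) {n₁ n₂ : ℤ} (hn : (n₁, n₂) ≠ (0, 0)) :
    min (1 / L₁ ^ 2) (1 / L₂ ^ 2) ≤ (n₁ / L₁) ^ 2 + (n₂ / L₂) ^ 2 := by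
  have key : ∀ (n : ℤ) (L : ℝ), n ≠ 0 → 1 / L ^ 2 ≤ (n / L) ^ 2 := fun n L hn => by
    have hn2 : (1 : ℝ) ≤ (n : ℝ) ^ 2 :=
      mod_cast (one_le_sq_iff_one_le_abs _).mpr (Int.one_le_abs hn)
    rw [div_pow]
    exact div_le_div_of_nonneg_right hn2 (sq_nonneg L)
  rcases eq_or_ne n₁ 0 with rfl | hn₁
  · have hn₂ : n₂ ≠ 0 := by rintro rfl; exact hn rfl
    exact (min_le_right _ _).trans ((key n₂ L₂ hn₂).trans (le_add_of_nonneg_left (sq_nonneg _)))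
  · exact (min_le_left _ _).trans ((key n₁ L₁ hn₁).trans (le_add_of_nonneg_right (sq_nonneg _)))

theorem integral_Ioo_cos_sq_int_div_mul_add {L : ℝ} (hL : 0 < L) {n : ℤ} (hn : n ≠ 0) (d : ℝ) :
    ∫ x in Ioo 0 (2 * π * L), cos (n / L * x + d) ^ 2 = π * L := by
  have hc : (n / L : ℝ) ≠ 0 := div_ne_zero (Int.cast_ne_zero.mpr hn) hL.ne'
  rw [← integral_Ioc_eq_integral_Ioo, ← intervalIntegral.integral_of_le (by positivity),
    intervalIntegral.integral_comp_mul_add (fun u => cos u ^ 2) hc d,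
    show n / L * (2 * π * L) + d = d + n * (2 * π) by field_simp; ring, mul_zero, zero_add,
    integral_cos_sq, cos_add_int_mul_two_pi, sin_add_int_mul_two_pi, smul_eq_mul]
  field_simp
  ring

theorem setIntegral_finTwo_eq_setIntegral_prod (F : ℝ → ℝ → ℝ) (s t : Set ℝ) :
    ∫ yh in {yh : Fin 2 → ℝ | yh 0 ∈ s ∧ yh 1 ∈ t}, F (yh 0) (yh 1) =
      ∫ p in s ×ˢ t, F p.1 p.2 :=
  (volume_preserving_finTwoArrow ℝ).setIntegral_preimage_emb
    (MeasurableEquiv.finTwoArrow).measurableEmbedding (fun p => F p.1 p.2) (s ×ˢ t)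

theorem integral_cos_sq_lattice_phase {L₁ L₂ : ℝ} (hL₁ : 0 < L₁) (hL₂ : 0 < L₂) {n₁ n₂ : ℤ}
    (hn : (n₁, n₂) ≠ (0, 0)) :
    ∫ yh in {yh : Fin 2 → ℝ | yh 0 ∈ Ioo 0 (2 * π * L₁) ∧ yh 1 ∈ Ioo 0 (2 * π * L₂)},
      cos (n₁ / L₁ * yh 0 + n₂ / L₂ * yh 1) ^ 2 = 2 * π ^ 2 * L₁ * L₂ := by
  have hint : IntegrableOn (fun p : ℝ × ℝ => cos (n₁ / L₁ * p.1 + n₂ / L₂ * p.2) ^ 2)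
      (Ioo 0 (2 * π * L₁) ×ˢ Ioo 0 (2 * π * L₂)) (volume.prod volume) :=
    (ContinuousOn.integrableOn_compact (isCompact_Icc.prod isCompact_Icc) (by fun_prop)).mono_set
      (prod_mono Ioo_subset_Icc_self Ioo_subset_Icc_self)
  rw [setIntegral_finTwo_eq_setIntegral_prod (fun x y => cos (n₁ / L₁ * x + n₂ / L₂ * y) ^ 2),
    Measure.volume_eq_prod, setIntegral_prod _ hint]
  rcases eq_or_ne n₂ 0 with rfl | hn₂
  · have hn₁ : n₁ ≠ 0 := by rintro rfl; exact hn rfl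
    simp only [Int.cast_zero, zero_div, zero_mul, add_zero, setIntegral_const,
      Real.volume_real_Ioo_of_le (by positivity : (0 : ℝ) ≤ 2 * π * L₂), smul_eq_mul,
      integral_const_mul]
    have h₁ := integral_Ioo_cos_sq_int_div_mul_add hL₁ hn₁ 0
    simp only [add_zero] at h₁
    rw [h₁]
    ring
  · simp only [add_comm (n₁ / L₁ * _), integral_Ioo_cos_sq_int_div_mul_add hL₂ hn₂,
      setIntegral_const, Real.volume_real_Ioo_of_le (by positivity : (0 : ℝ) ≤ 2 * π * L₁),
      smul_eq_mul]
    ring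

theorem stmt_3_general (L₁ L₂ l τ a : ℝ) (hL₁ : 0 < L₁) (hL₂ : 0 < L₂) (hl : 0 < l) (hτ : 0 < τ)
    (ha : 0 < a) (M : Fin 3 → ℝ) :
    ∃ w : (Fin 3 → ℝ) → (Fin 3 → ℝ),
      ContDiff ℝ (⊤ : ℕ∞) w ∧
      (∀ y, w (y + Pi.single 0 (2 * π * L₁)) = w y) ∧
      (∀ y, w (y + Pi.single 1 (2 * π * L₂)) = w y) ∧
      (∀ y, (∑ i : Fin 3, fderiv ℝ (fun z => w z i) y (Pi.single i 1)) = 0) ∧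
      (∃ K : Set ℝ, IsCompact K ∧ K ⊆ Set.Ioo (-l) τ ∧
        ∀ y : Fin 3 → ℝ, y 2 ∉ K → w y = 0) ∧
      (∃ yh : Fin 2 → ℝ, w ![yh 0, yh 1, 0] 2 ≠ 0) ∧
      (∫ y in {y : Fin 3 → ℝ | y 0 ∈ Set.Ioo 0 (2 * π * L₁) ∧
            y 1 ∈ Set.Ioo 0 (2 * π * L₂) ∧ y 2 ∈ Set.Ioo (-l) τ},
          ∑ j : Fin 3,
            (M 0 * fderiv ℝ (fun z => w z j) y (Pi.single 0 1) +
             M 1 * fderiv ℝ (fun z => w z j) y (Pi.single 1 1)) ^ 2)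
        < a * ∫ yh in {yh : Fin 2 → ℝ | yh 0 ∈ Set.Ioo 0 (2 * π * L₁) ∧
              yh 1 ∈ Set.Ioo 0 (2 * π * L₂)},
            (w ![yh 0, yh 1, 0] 2) ^ 2 := by
  obtain ⟨f, hfK, hfc, hf, hf01, hf0⟩ :=
    exists_contDiff_tsupport_subset (n := ⊤) (Ioo_mem_nhds (neg_neg_of_pos hl) hτ)
  have hf' : ContDiff ℝ ∞ (deriv f) := (contDiff_infty_iff_deriv.mp hf).2
  have hf1 : ∀ t, |f t| ≤ 1 := fun t =>
    abs_le.mpr ⟨by linarith [(hf01 ⟨t, rfl⟩).1], (hf01 ⟨t, rfl⟩).2⟩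
  obtain ⟨C, hC⟩ := hf'.continuous.bounded_above_of_compact_support hfc.deriv
  set κ := min (1 / L₁ ^ 2) (1 / L₂ ^ 2)
  have hκ : 0 < κ := lt_min (by positivity) (by positivity)
  set V := volume.real {y : Fin 3 → ℝ | y 0 ∈ Set.Ioo 0 (2 * π * L₁) ∧
    y 1 ∈ Set.Ioo 0 (2 * π * L₂) ∧ y 2 ∈ Set.Ioo (-l) τ}
  set R := 2 * π ^ 2 * L₁ * L₂
  obtain ⟨n₁, n₂, hn, hsmall⟩ := exists_int_pair_ne_zero_abs_mul_add_mul_lt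
    (M 0 / L₁) (M 1 / L₂) (ε := √(a * R / ((C ^ 2 / κ + 1) * V + 1))) (by positivity)
  have hsmall' :
      (M 0 * (n₁ / L₁) + M 1 * (n₂ / L₂)) ^ 2 * ((C ^ 2 / κ + 1) * V + 1) < a * R := by
    rw [Real.lt_sqrt (abs_nonneg _), sq_abs, lt_div_iff₀ (by positivity)] at hsmall
    rwa [show M 0 * (n₁ / L₁) + M 1 * (n₂ / L₂) = n₁ * (M 0 / L₁) + n₂ * (M 1 / L₂) by ring]
  refine ⟨solenoidalMode f (n₁ / L₁) (n₂ / L₂), contDiff_solenoidalMode hf,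
    fun y => solenoidalMode_add y (by simp) (k := n₁) ?_,
    fun y => solenoidalMode_add y (by simp) (k := n₂) ?_,
    sum_fderiv_solenoidalMode (hf.differentiable (by simp)) (hf'.differentiable (by simp))
      (hκ.trans_le (min_one_div_sq_le_sq_add_sq L₁ L₂ hn)).ne',
    ⟨tsupport f, hfc, hfK, fun y hy => solenoidalMode_eq_zero hy⟩,
    ⟨0, by rw [solenoidalMode_trace, hf0]; simp⟩, ?_⟩
  · rw [Pi.single_eq_same, Pi.single_eq_of_ne (by decide), mul_zero, add_zero]; field_simp
  · rw [Pi.single_eq_same, Pi.single_eq_of_ne (by decide), mul_zero, zero_add]; field_simp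
  calc _ ≤ (M 0 * (n₁ / L₁) + M 1 * (n₂ / L₂)) ^ 2 * (C ^ 2 / κ + 1) * V :=
        setIntegral_sum_sq_horizontalDeriv_solenoidalMode_le (hf.differentiable (by simp))
          (hf'.differentiable (by simp)) hC hf1 hκ
          (min_one_div_sq_le_sq_add_sq L₁ L₂ hn) _ _ (volume_setOf_mem_Ioo_lt_top ..)
    _ < a * R := by nlinarith [sq_nonneg (M 0 * (n₁ / L₁) + M 1 * (n₂ / L₂))]
    _ = _ := by
        simp only [solenoidalMode_trace, hf0, one_mul, integral_cos_sq_lattice_phase hL₁ hL₂ hn]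
        rfl

/-- A horizontal magnetic field cannot stabilize: for any nonzero `M̄ = (M̄₁, M̄₂, 0)` and
any `a > 0` there is a smooth, horizontally periodic, divergence-free vector field `w`,
vanishing for `y₃` outside a compact subset of `(-l, τ)`, with nontrivial interface trace,
such that `∫_{Q×(-l,τ)} |M̄₁∂₁w + M̄₂∂₂w|² < a ∫_Q |w₃(y_h, 0)|²`. -/
theorem stmt_3 (L₁ L₂ l τ a : ℝ) (hL₁ : 0 < L₁) (hL₂ : 0 < L₂) (hl : 0 < l) (hτ : 0 < τ)
    (ha : 0 < a) (M : Fin 3 → ℝ) (hM3 : M 2 = 0) (hM : M ≠ 0) :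
    ∃ w : (Fin 3 → ℝ) → (Fin 3 → ℝ),
      ContDiff ℝ (⊤ : ℕ∞) w ∧
      (∀ y, w (y + Pi.single 0 (2 * π * L₁)) = w y) ∧
      (∀ y, w (y + Pi.single 1 (2 * π * L₂)) = w y) ∧
      (∀ y, (∑ i : Fin 3, fderiv ℝ (fun z => w z i) y (Pi.single i 1)) = 0) ∧
      (∃ K : Set ℝ, IsCompact K ∧ K ⊆ Set.Ioo (-l) τ ∧
        ∀ y : Fin 3 → ℝ, y 2 ∉ K → w y = 0) ∧
      (∃ yh : Fin 2 → ℝ, w ![yh 0, yh 1, 0] 2 ≠ 0) ∧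
      (∫ y in {y : Fin 3 → ℝ | y 0 ∈ Set.Ioo 0 (2 * π * L₁) ∧
            y 1 ∈ Set.Ioo 0 (2 * π * L₂) ∧ y 2 ∈ Set.Ioo (-l) τ},
          ∑ j : Fin 3,
            (M 0 * fderiv ℝ (fun z => w z j) y (Pi.single 0 1) +
             M 1 * fderiv ℝ (fun z => w z j) y (Pi.single 1 1)) ^ 2)
        < a * ∫ yh in {yh : Fin 2 → ℝ | yh 0 ∈ Set.Ioo 0 (2 * π * L₁) ∧
              yh 1 ∈ Set.Ioo 0 (2 * π * L₂)},
            (w ![yh 0, yh 1, 0] 2) ^ 2 :=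
  stmt_3_general L₁ L₂ l τ a hL₁ hL₂ hl hτ ha M
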